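/- For every τ in the upper half-plane, θ(−τ; 3τ) = i·q^{−1/6}·η(τ) and θ(τ; 3τ) = −i·q^{−1/6}·η(τ). -/

import Mathlib

open Complex MeasureTheory
open scoped Real

noncomputable section

/-- `p(n)`: the number of partitions of `n`. -/
def partitionCount (n : ℕ) : ℕ := Fintype.card (Nat.Partition n)

/-- The rank of a partition: its largest part minus the number of its parts. -/
def partitionRank {n : ℕ} (lam : Nat.Partition n) : ℤ :=
  (lam.parts.sup : ℤ) - lam.parts.card

/-- `N(m,n)`: the number of partitions of `n` with rank `m`. -/
def rankCount (m : ℤ) (n : ℕ) : ℕ :=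
  Fintype.card {lam : Nat.Partition n // partitionRank lam = m}

/-- `sech` -/
def sech (t : ℝ) : ℝ := 1 / Real.cosh t

/-- `β = π / √(6n)` -/
def betav (n : ℕ) : ℝ := π / Real.sqrt (6 * n)

/-- `s = β (1 + i x m^{-1/3})` -/
def sval (n m : ℕ) (x : ℝ) : ℂ :=
  (betav n : ℂ) * (1 + I * (x : ℂ) * ((m : ℝ) ^ (-(1 : ℝ)/3) : ℝ))

/-- The rank generating function `R(z; τ)`. -/
def rankGen (z τ : ℂ) : ℂ :=
  ∑' n : ℕ, ∑' m : ℤ,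
    (rankCount m n : ℂ) * Complex.exp (2 * π * I * z) ^ m * Complex.exp (2 * π * I * τ) ^ n

/-- The Dedekind eta function. -/
def dedekindEta (τ : ℂ) : ℂ :=
  Complex.exp (π * I * τ / 12) * ∏' n : ℕ, (1 - Complex.exp (2 * π * I * τ) ^ (n + 1))

/-- The Jacobi theta function `θ(z;τ)`. -/
def thetaFn (z τ : ℂ) : ℂ :=
  I * Complex.exp (π * I * τ / 4) * Complex.exp (π * I * z) *
    ∏' n : ℕ,
      ((1 - Complex.exp (2 * π * I * τ) ^ (n + 1)) *
        (1 - Complex.exp (2 * π * I * z) * Complex.exp (2 * π * I * τ) ^ (n + 1)) *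
        (1 - (Complex.exp (2 * π * I * z))⁻¹ * Complex.exp (2 * π * I * τ) ^ n))

/-- The Appell–Lerch sum `A₁(u,v;τ)`. -/
def A1 (u v τ : ℂ) : ℂ :=
  Complex.exp (π * I * u) *
    ∑' n : ℤ, (-1 : ℂ) ^ n * Complex.exp (2 * π * I * τ) ^ ((n ^ 2 + n) / 2) *
      Complex.exp (2 * π * I * n * v) /
        (1 - Complex.exp (2 * π * I * u) * Complex.exp (2 * π * I * τ) ^ n)

/-- The Mordell integral `h(z;τ)`. -/
def mordellH (z τ : ℂ) : ℂ :=
  ∫ w : ℝ, Complex.exp (π * I * τ * w ^ 2 - 2 * π * z * w) / Complex.cosh (π * w)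

/-- `R_m(τ)`. -/
def rankGenCoeff (m : ℤ) (τ : ℂ) : ℂ :=
  ∫ z in (-1/2 : ℝ)..(1/2 : ℝ), rankGen z τ * Complex.exp (-2 * π * I * m * z)

/-- `g_m(z;τ)`. -/
def gFun (m : ℕ) (z τ : ℂ) : ℂ :=
  if m % 3 = 0 then
    -A1 (3 * z) τ (3 * τ) * Complex.exp (3 * π * I * z) +
      A1 (3 * z) (-τ) (3 * τ) * Complex.exp (-3 * π * I * z)
  else if m % 3 = 1 then
    -A1 (3 * z) (-τ) (3 * τ) * Complex.exp (-π * I * z) -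
      I * (dedekindEta (3 * τ)) ^ 3 / thetaFn (3 * z) (3 * τ) * Complex.exp (-π * I * z)
  else
    A1 (3 * z) τ (3 * τ) * Complex.exp (π * I * z) +
      I * (dedekindEta (3 * τ)) ^ 3 / thetaFn (3 * z) (3 * τ) * Complex.exp (π * I * z)

/-- `E_k(0)` via the generating function `2e^{xz}/(e^z+1)` at `x = 0`. -/
def eulerZero (k : ℕ) : ℚ :=
  (k.factorial : ℚ) *
    PowerSeries.coeff k (PowerSeries.C 2 * (PowerSeries.exp ℚ + 1)⁻¹)

/-- Generating function of partitions. -/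
def partitionGen (q : ℂ) : ℂ := ∏' n : ℕ, (1 - q ^ (n + 1))⁻¹

/-- membership in the lattice `ℤ + ℤτ`. -/
def inLattice (τ w : ℂ) : Prop := ∃ a b : ℤ, w = (a : ℂ) + (b : ℂ) * τ

/-!
Splitting off the factor `1 - ζ⁻¹` of the triple product shows that `θ(·; τ)` is odd, so the
second identity follows from the first. At `z = -τ` with modulus `3τ` the `n`-th term of the
triple product is `(1 - q^(3n+3)) (1 - q^(3n+2)) (1 - q^(3n+1))`, so the product regroups into
`∏ (1 - q^(k+1))`, while the prefactor `q^(3/8) q^(-1/2) = q^(-1/6) q^(1/24)`.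
-/

theorem HasProd.prod_fin_nat_mul_add {α : Type*} [CommMonoid α] [TopologicalSpace α]
    [ContinuousMul α] [RegularSpace α] {f : ℕ → α} {a : α} (k : ℕ) [NeZero k]
    (hf : HasProd f a) : HasProd (fun n ↦ ∏ i : Fin k, f (n * k + i)) a :=
  ((Nat.divModEquiv k).symm.hasProd_iff.mpr hf).prod_fiberwise fun _ ↦ hasProd_fintype _

lemma multipliable_one_sub_mul_pow_add {q : ℂ} (hq : ‖q‖ < 1) (c : ℂ) (k : ℕ) :
    Multipliable fun n : ℕ ↦ 1 - c * q ^ (n + k) := by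
  simp_rw [sub_eq_add_neg]
  refine multipliable_one_add_of_summable ?_
  have hgeom : Summable fun n : ℕ ↦ ‖q‖ ^ (n + k) :=
    (summable_nat_add_iff k).mpr (summable_geometric_of_lt_one (norm_nonneg q) hq)
  refine (hgeom.mul_left ‖c‖).congr fun n ↦ ?_
  rw [norm_neg, norm_mul, norm_pow]

lemma norm_exp_two_pi_I_mul_lt_one {τ : ℂ} (hτ : 0 < τ.im) :
    ‖Complex.exp (2 * π * I * τ)‖ < 1 :=
  UpperHalfPlane.norm_exp_two_pi_I_lt_one ⟨τ, hτ⟩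

lemma tprod_thetaFn_factors_eq {q : ℂ} (hq : ‖q‖ < 1) (w : ℂ) :
    ∏' n : ℕ, ((1 - q ^ (n + 1)) * (1 - w * q ^ (n + 1)) * (1 - w⁻¹ * q ^ n)) =
      (1 - w⁻¹) * ((∏' n : ℕ, (1 - q ^ (n + 1))) * (∏' n : ℕ, (1 - w * q ^ (n + 1))) *
        ∏' n : ℕ, (1 - w⁻¹ * q ^ (n + 1))) := by
  have hη : Multipliable fun n : ℕ ↦ 1 - q ^ (n + 1) := ModularForm.multipliable_one_sub_pow hq
  have hw : Multipliable fun n : ℕ ↦ 1 - w * q ^ (n + 1) :=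
    multipliable_one_sub_mul_pow_add hq w 1
  have hw' : Multipliable fun n : ℕ ↦ 1 - w⁻¹ * q ^ n := by
    simpa using multipliable_one_sub_mul_pow_add hq w⁻¹ 0
  have hw'₁ : Multipliable fun n : ℕ ↦ 1 - w⁻¹ * q ^ (n + 1) :=
    multipliable_one_sub_mul_pow_add hq w⁻¹ 1
  rw [(hη.mul hw).tprod_mul hw', hη.tprod_mul hw,
    tprod_eq_zero_mul' (f := fun n ↦ 1 - w⁻¹ * q ^ n) hw'₁, pow_zero, mul_one]
  ring

theorem thetaFn_neg (z : ℂ) {τ : ℂ} (hτ : 0 < τ.im) : thetaFn (-z) τ = -thetaFn z τ := by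
  have hq := norm_exp_two_pi_I_mul_lt_one hτ
  have hζ : Complex.exp (2 * π * I * -z) = (Complex.exp (2 * π * I * z))⁻¹ := by
    rw [mul_neg, Complex.exp_neg]
  have hsq : Complex.exp (2 * π * I * z) = Complex.exp (π * I * z) ^ 2 := by
    rw [← Complex.exp_nat_mul]
    ring_nf
  have hhalf : Complex.exp (π * I * -z) = (Complex.exp (π * I * z))⁻¹ := by
    rw [mul_neg, Complex.exp_neg]
  unfold thetaFn
  rw [hζ, tprod_thetaFn_factors_eq hq, inv_inv, tprod_thetaFn_factors_eq hq, hsq, hhalf]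
  have he : Complex.exp (π * I * z) ≠ 0 := Complex.exp_ne_zero _
  field_simp
  ring

theorem thetaFn_neg_self_three_mul {τ : ℂ} (hτ : 0 < τ.im) :
    thetaFn (-τ) (3 * τ) = I * Complex.exp (-π * I * τ / 3) * dedekindEta τ := by
  set q := Complex.exp (2 * π * I * τ)
  have hq : ‖q‖ < 1 := norm_exp_two_pi_I_mul_lt_one hτ
  have hq0 : q ≠ 0 := Complex.exp_ne_zero _
  have hcube : Complex.exp (2 * π * I * (3 * τ)) = q ^ 3 := by
    rw [← Complex.exp_nat_mul]
    ring_nf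
  have hinv : Complex.exp (2 * π * I * -τ) = q⁻¹ := by
    rw [mul_neg, Complex.exp_neg]
  have hprod : ∏' n : ℕ, ((1 - (q ^ 3) ^ (n + 1)) * (1 - q⁻¹ * (q ^ 3) ^ (n + 1)) *
      (1 - q⁻¹⁻¹ * (q ^ 3) ^ n)) = ∏' n : ℕ, (1 - q ^ (n + 1)) := by
    rw [← ((ModularForm.multipliable_one_sub_pow hq).hasProd.prod_fin_nat_mul_add 3).tprod_eq]
    refine tprod_congr fun n ↦ ?_
    simp only [Fin.prod_univ_three, Fin.val_zero, Fin.val_one, Fin.val_two]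
    field_simp
    ring
  have hexp : Complex.exp (π * I * (3 * τ) / 4) * Complex.exp (π * I * -τ) =
      Complex.exp (-π * I * τ / 3) * Complex.exp (π * I * τ / 12) := by
    rw [← Complex.exp_add, ← Complex.exp_add]
    ring_nf
  unfold thetaFn dedekindEta
  rw [hcube, hinv, hprod]
  linear_combination (I * ∏' n : ℕ, (1 - q ^ (n + 1))) * hexp

/-- `θ(∓τ; 3τ) = ±i q^{-1/6} η(τ)`. -/
theorem theta_at_pm_tau (τ : ℂ) (hτ : 0 < τ.im) :
    thetaFn (-τ) (3 * τ) = I * Complex.exp (-π * I * τ / 3) * dedekindEta τ ∧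
      thetaFn τ (3 * τ) = -I * Complex.exp (-π * I * τ / 3) * dedekindEta τ := by
  have hminus := thetaFn_neg_self_three_mul hτ
  have h3τ : 0 < (3 * τ).im := by simpa using hτ
  have hodd := thetaFn_neg (-τ) h3τ
  rw [neg_neg] at hodd
  refine ⟨hminus, ?_⟩
  rw [hodd, hminus]
  ring
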